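/- Let (X,d,p) be a pointed metric space and E = S_p(X) = {d(x,p) : x ∈ X}. The family Ω_p^X(n) is uniformly bounded (i.e., R*(Ω_p^X(n)) < ∞) if and only if E is completely strongly porous at 0. Moreover, if Ω_p^X(n) is uniformly bounded and p is an accumulation point of X, then R*(Ω_p^X(n)) = M(L̃) for every universal element L̃ of Ĩ_Eᵈ. -/

import Mathlib

open Filter Topology Set
open scoped ENNReal

/-- A scaling sequence: strictly positive reals tending to zero. -/
def IsScaling (r : ℕ → ℝ) : Prop := (∀ n, 0 < r n) ∧ Tendsto r atTop (𝓝 0)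

/-- A sequence of reals is almost decreasing if it is eventually nonincreasing. -/
def AlmostDecreasing (t : ℕ → ℝ) : Prop := ∀ᶠ n in atTop, t (n + 1) ≤ t n

/-- `τ ∈ Ẽ₀ᵈ`: almost decreasing, values in `E \ {0}`, tending to `0`. -/
def MemE0d (E : Set ℝ) (t : ℕ → ℝ) : Prop :=
  AlmostDecreasing t ∧ (∀ n, t n ∈ E \ {0}) ∧ Tendsto t atTop (𝓝 0)

/-- `(a,b)` is a connected component of `Int(ℝ⁺ \ E)`: an open interval in `ℝ⁺`
missing `E` that is maximal (among such intervals) with this property. -/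
def IsGapComponent (E : Set ℝ) (a b : ℝ) : Prop :=
  0 ≤ a ∧ a < b ∧ Ioo a b ∩ E = ∅ ∧
    ∀ a' b' : ℝ, 0 ≤ a' → a' ≤ a → b ≤ b' → Ioo a' b' ∩ E = ∅ → a' = a ∧ b' = b

/-- `((aₙ,bₙ))ₙ ∈ Ĩ_Eᵈ`. -/
def MemIE (E : Set ℝ) (a b : ℕ → ℝ) : Prop :=
  (∀ n, IsGapComponent E (a n) (b n)) ∧ AlmostDecreasing a ∧
    Tendsto a atTop (𝓝 0) ∧ Tendsto (fun n => (b n - a n) / b n) atTop (𝓝 1)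

/-- `x̃ ≍ ỹ`: there are `c₁, c₂ > 0` with `c₁ xₙ < yₙ < c₂ xₙ` for all `n`. -/
def Asymp (x y : ℕ → ℝ) : Prop :=
  ∃ c₁ c₂ : ℝ, 0 < c₁ ∧ 0 < c₂ ∧ ∀ n, c₁ * x n < y n ∧ y n < c₂ * x n

/-- `E` is `τ̃`-strongly porous at `0`. -/
def TauStronglyPorous (E : Set ℝ) (t : ℕ → ℝ) : Prop :=
  ∃ a b : ℕ → ℝ, MemIE E a b ∧ Asymp t a

/-- `E` is completely strongly porous at `0`. -/
def CSP (E : Set ℝ) : Prop := ∀ t : ℕ → ℝ, MemE0d E t → TauStronglyPorous E t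

/-- `L̃ = ((lₙ,mₙ)) ∈ Ĩ_Eᵈ` is universal. -/
def IsUniversal (E : Set ℝ) (l m : ℕ → ℝ) : Prop :=
  MemIE E l m ∧ ∀ a b : ℕ → ℝ, MemIE E a b →
    ∃ (N₁ : ℕ) (f : ℕ → ℕ), ∀ n, N₁ ≤ n → a n = l (f n)

/-- `M(L̃) = limsupₙ lₙ/mₙ₊₁`, as an element of `[0,∞]`. -/
noncomputable def Mlim (l m : ℕ → ℝ) : ℝ≥0∞ :=
  limsup (fun n => ENNReal.ofReal (l n / m (n + 1))) atTop

/-- `C(τ̃) = inf{ limsupₙ aₙ/τₙ : ((aₙ,bₙ)) ∈ Ĩ_Eᵈ(τ̃) }` (inf ∅ = ∞). -/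
noncomputable def Ctau (E : Set ℝ) (t : ℕ → ℝ) : ℝ≥0∞ :=
  sInf {c : ℝ≥0∞ | ∃ a b : ℕ → ℝ, MemIE E a b ∧ (∀ᶠ n in atTop, t n ≤ a n) ∧
    c = limsup (fun n => ENNReal.ofReal (a n / t n)) atTop}

/-- `C_E = sup_{τ̃ ∈ Ẽ₀ᵈ} C(τ̃)`. -/
noncomputable def Ctot (E : Set ℝ) : ℝ≥0∞ :=
  ⨆ t ∈ {t : ℕ → ℝ | MemE0d E t}, Ctau E t

/-- A normal scaling sequence for the pointed metric space `(E, |·|, 0)`. -/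
def IsNormalE (E : Set ℝ) (r : ℕ → ℝ) : Prop :=
  IsScaling r ∧ ∃ s : ℕ → ℝ, (∀ n, s n ∈ E) ∧ AlmostDecreasing s ∧
    Tendsto (fun n => s n / r n) atTop (𝓝 1)

/-- `R*(Ω₀ᴱ(n))`: the sup of all limits `limₙ sₙ/rₙ` over normal scaling sequences `r`
for `(E,|·|,0)` and sequences `s` in `E` for which the finite limit exists (sup ∅ = 0). -/
noncomputable def RstarE (E : Set ℝ) : ℝ≥0∞ :=
  sSup {c : ℝ≥0∞ | ∃ (r s : ℕ → ℝ) (L : ℝ), IsNormalE E r ∧ (∀ n, s n ∈ E) ∧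
    Tendsto (fun n => s n / r n) atTop (𝓝 L) ∧ c = ENNReal.ofReal L}

/-- `x̃` and `ỹ` are mutually stable w.r.t. `r̃`. -/
def MutuallyStable {X : Type*} [MetricSpace X] (r : ℕ → ℝ) (x y : ℕ → X) : Prop :=
  ∃ L : ℝ, Tendsto (fun n => dist (x n) (y n) / r n) atTop (𝓝 L)

/-- A family of sequences is self-stable w.r.t. `r̃`. -/
def SelfStable {X : Type*} [MetricSpace X] (r : ℕ → ℝ) (F : Set (ℕ → X)) : Prop :=
  ∀ x ∈ F, ∀ y ∈ F, MutuallyStable r x y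

/-- A maximal self-stable family w.r.t. `r̃`. -/
def MaximalSelfStable {X : Type*} [MetricSpace X] (r : ℕ → ℝ) (F : Set (ℕ → X)) : Prop :=
  SelfStable r F ∧ ∀ z : ℕ → X, z ∈ F ∨ ∃ x ∈ F, ¬ MutuallyStable r x z

/-- A normal scaling sequence for the pointed metric space `(X,d,p)`. -/
def IsNormalX {X : Type*} [MetricSpace X] (p : X) (r : ℕ → ℝ) : Prop :=
  IsScaling r ∧ ∃ x : ℕ → X, AlmostDecreasing (fun n => dist (x n) p) ∧
    Tendsto (fun n => dist (x n) p / r n) atTop (𝓝 1)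

/-- `R*(Ω_pˣ(n))`: the sup of all limits `limₙ d(xₙ,p)/rₙ` over normal scaling
sequences `r̃` and sequences `x̃` in `X` for which the finite limit exists (sup ∅ = 0). -/
noncomputable def RstarX {X : Type*} [MetricSpace X] (p : X) : ℝ≥0∞ :=
  sSup {c : ℝ≥0∞ | ∃ (r : ℕ → ℝ) (x : ℕ → X) (L : ℝ), IsNormalX p r ∧
    Tendsto (fun n => dist (x n) p / r n) atTop (𝓝 L) ∧ c = ENNReal.ofReal L}

/-- `R₊(Ω_pˣ(n))`: the inf of the strictly positive such limits (inf ∅ = ∞). -/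
noncomputable def RlowX {X : Type*} [MetricSpace X] (p : X) : ℝ≥0∞ :=
  sInf {c : ℝ≥0∞ | ∃ (r : ℕ → ℝ) (x : ℕ → X) (L : ℝ), IsNormalX p r ∧
    Tendsto (fun n => dist (x n) p / r n) atTop (𝓝 L) ∧ 0 < L ∧ c = ENNReal.ofReal L}


/-!
Write `E` for the distance set. Replacing a normal scaling sequence by the distances that witness
its normality, `R*` becomes the supremum of the limits `lim sₙ/τₙ` with `τ ∈ Ẽ₀ᵈ` and `s` in `E`.
If these limits stay below `K`, then for every `τ ∈ Ẽ₀ᵈ` the gap starting at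
`sup (E ∩ [τₙ, Kτₙ])` ends at `inf (E ∩ (Kτₙ, ∞)) ≫ τₙ`, since otherwise Bolzano–Weierstrass
produces a limit `≥ K`; so `E` is `τ`-strongly porous. If they are unbounded, a diagonal `τ` sees
points of `E` at every ratio `k` infinitely often, and no gap sequence `≍ τ` can avoid them.

A universal `L̃` eventually lists every such gap. A limit `lim sₙ/τₙ` is then dominated by
`l_v / m_{v+1}` at the end `v` of the plateau of `l` through the gap of `τₙ`, while indices
realising `M(L̃)` yield points of `E` near `l_v` and `m_{v+1}` whose ratio tends to `M(L̃)`.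
Finally `M(L̃) = ∞` would produce a gap starting strictly between two consecutive values of `l`.
-/

namespace AlmostDecreasing

variable {t t' : ℕ → ℝ}

lemma exists_antitone_tail (h : AlmostDecreasing t) :
    ∃ N, ∀ ⦃i j : ℕ⦄, N ≤ i → i ≤ j → t j ≤ t i := by
  obtain ⟨N, hN⟩ := eventually_atTop.1 h
  refine ⟨N, fun i j hi hij => ?_⟩
  induction j, hij using Nat.le_induction with
  | base => rfl
  | succ k hik ih => exact (hN k (hi.trans hik)).trans ih

lemma exists_forall_notMem_Ioo (h : AlmostDecreasing t) :
    ∃ N, ∀ ⦃i w : ℕ⦄, N ≤ i → N ≤ w → t i ∉ Ioo (t (w + 1)) (t w) := by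
  obtain ⟨N, hN⟩ := h.exists_antitone_tail
  refine ⟨N, fun i w hi hw ⟨hlow, hup⟩ => ?_⟩
  rcases le_or_gt i w with hiw | hwi
  · exact (hN hi hiw).not_gt hup
  · exact (hN (hw.trans w.le_succ) hwi).not_gt hlow

lemma congr (h : AlmostDecreasing t) (h' : t =ᶠ[atTop] t') : AlmostDecreasing t' := by
  filter_upwards [h, h', (tendsto_add_atTop_nat 1).eventually h'] with n hn e e₁
  rwa [← e, ← e₁]

lemma comp_add (h : AlmostDecreasing t) (N : ℕ) : AlmostDecreasing (fun n => t (n + N)) := by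
  filter_upwards [(tendsto_add_atTop_nat N).eventually h] with n hn
  rwa [Nat.add_right_comm] at hn

lemma comp_strictMono (h : AlmostDecreasing t) {φ : ℕ → ℕ} (hφ : StrictMono φ) :
    AlmostDecreasing (t ∘ φ) := by
  obtain ⟨N, hN⟩ := h.exists_antitone_tail
  filter_upwards [eventually_ge_atTop N] with n hn
  exact hN (hn.trans (hφ.id_le n)) (hφ.monotone n.le_succ)

end AlmostDecreasing

lemma StrictAnti.almostDecreasing {t : ℕ → ℝ} (h : StrictAnti t) : AlmostDecreasing t :=
  Eventually.of_forall fun n => (h n.lt_succ_self).le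

lemma exists_strictAnti_subseq {t : ℕ → ℝ} (hpos : ∀ n, 0 < t n)
    (h0 : Tendsto t atTop (𝓝 0)) : ∃ ψ : ℕ → ℕ, StrictMono ψ ∧ StrictAnti (t ∘ ψ) := by
  have hinv : Tendsto t⁻¹ atTop atTop :=
    (tendsto_nhdsWithin_iff.2 ⟨h0, Eventually.of_forall hpos⟩).inv_tendsto_nhdsGT_zero
  obtain ⟨ψ, hψ, hmono⟩ := strictMono_subseq_of_tendsto_atTop hinv
  exact ⟨ψ, hψ, fun i j hij => (inv_lt_inv₀ (hpos _) (hpos _)).1 (hmono hij)⟩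

namespace MemE0d

variable {E : Set ℝ} {t : ℕ → ℝ}

lemma pos (hE : E ⊆ Ici 0) (h : MemE0d E t) (n : ℕ) : 0 < t n :=
  (hE (h.2.1 n).1).lt_of_ne' (h.2.1 n).2

lemma comp_strictMono (h : MemE0d E t) {φ : ℕ → ℕ} (hφ : StrictMono φ) : MemE0d E (t ∘ φ) :=
  ⟨h.1.comp_strictMono hφ, fun n => h.2.1 (φ n), h.2.2.comp hφ.tendsto_atTop⟩

lemma exists_mem_pos_lt (hE : E ⊆ Ici 0) (h : MemE0d E t) {ε : ℝ} (hε : 0 < ε) :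
    ∃ e ∈ E, 0 < e ∧ e < ε :=
  let ⟨n, hn⟩ := (h.2.2.eventually (gt_mem_nhds hε)).exists
  ⟨t n, (h.2.1 n).1, h.pos hE n, hn⟩

end MemE0d

namespace IsGapComponent

variable {E : Set ℝ} {a b a' b' x : ℝ}

lemma notMem (h : IsGapComponent E a b) (hx : x ∈ Ioo a b) : x ∉ E :=
  fun hxE => eq_empty_iff_forall_notMem.1 h.2.2.1 x ⟨hx, hxE⟩

lemma le_or_le (h : IsGapComponent E a b) (hx : x ∈ E) : x ≤ a ∨ b ≤ x := by
  by_contra! hx'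
  exact h.notMem hx' hx

lemma of_approx (h0 : 0 ≤ a) (hab : a < b) (hgap : Ioo a b ∩ E = ∅)
    (ha : ∀ a' < a, ∃ x ∈ E, a' < x ∧ x ≤ a) (hb : ∀ b' > b, ∃ x ∈ E, b ≤ x ∧ x < b') :
    IsGapComponent E a b := by
  refine ⟨h0, hab, hgap, fun a' b' _ ha' hb' hgap' => ⟨?_, ?_⟩⟩
  · by_contra hne
    obtain ⟨x, hx, hax, hxa⟩ := ha a' (ha'.lt_of_ne hne)
    exact eq_empty_iff_forall_notMem.1 hgap' x ⟨⟨hax, hxa.trans_lt (hab.trans_le hb')⟩, hx⟩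
  · by_contra hne
    obtain ⟨x, hx, hbx, hxb⟩ := hb b' (hb'.lt_of_ne' hne)
    exact eq_empty_iff_forall_notMem.1 hgap' x ⟨⟨ha'.trans_lt (hab.trans_le hbx), hxb⟩, hx⟩

lemma exists_mem_Ico (h : IsGapComponent E a b) (hb' : b < b') : ∃ x ∈ E, b ≤ x ∧ x < b' := by
  by_contra! hcon
  have hgap : Ioo a b' ∩ E = ∅ := by
    refine eq_empty_iff_forall_notMem.2 fun x ⟨hx, hxE⟩ => ?_
    rcases lt_or_ge x b with hxb | hbx
    · exact h.notMem ⟨hx.1, hxb⟩ hxE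
    · exact (hcon x hxE hbx).not_gt hx.2
  exact hb'.ne' (h.2.2.2 a b' h.1 le_rfl hb'.le hgap).2

lemma exists_mem_Ioc (h : IsGapComponent E a b) (ha : 0 < a) (ha' : a' < a) :
    ∃ x ∈ E, a' < x ∧ x ≤ a := by
  by_contra! hcon
  have hlt : max a' 0 < a := max_lt ha' ha
  have hgap : Ioo (max a' 0) b ∩ E = ∅ := by
    refine eq_empty_iff_forall_notMem.2 fun x ⟨hx, hxE⟩ => ?_
    rcases le_or_gt x a with hxa | hax
    · exact (hcon x hxE ((le_max_left a' 0).trans_lt hx.1)).not_ge hxa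
    · exact h.notMem ⟨hax, hx.2⟩ hxE
  exact hlt.ne (h.2.2.2 _ b (le_max_right a' 0) hlt.le le_rfl hgap).1

lemma pos (h0 : ∀ ε > 0, ∃ e ∈ E, 0 < e ∧ e < ε) (h : IsGapComponent E a b) : 0 < a := by
  refine h.1.lt_of_ne fun ha => ?_
  obtain ⟨e, he, he0, heb⟩ := h0 b (h.1.trans_lt h.2.1)
  exact h.notMem ⟨ha ▸ he0, heb⟩ he

lemma right_unique (h : IsGapComponent E a b) (h' : IsGapComponent E a b') : b = b' := by
  rcases le_total b b' with hle | hle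
  · exact (h.2.2.2 a b' h.1 le_rfl hle h'.2.2.1).2.symm
  · exact (h'.2.2.2 a b h'.1 le_rfl hle h.2.2.1).2

lemma right_le_of_lt (h : IsGapComponent E a b) (h' : IsGapComponent E a' b') (hlt : a' < a) :
    b' ≤ a := by
  by_contra! hab'
  obtain ⟨x, hx, hax, hxa⟩ := h.exists_mem_Ioc (h'.1.trans_lt hlt) hlt
  exact h'.notMem ⟨hax, hxa.trans_lt hab'⟩ hx

end IsGapComponent

namespace MemIE

variable {E : Set ℝ} {a b : ℕ → ℝ}

lemma right_pos (h : MemIE E a b) (n : ℕ) : 0 < b n :=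
  (h.1 n).1.trans_lt (h.1 n).2.1

lemma tendsto_div (h : MemIE E a b) : Tendsto (fun n => a n / b n) atTop (𝓝 0) := by
  have h1 := tendsto_const_nhds (x := (1 : ℝ)).sub h.2.2.2
  rw [sub_self] at h1
  refine h1.congr fun n => ?_
  rw [sub_div, div_self (h.right_pos n).ne', sub_sub_cancel]

end MemIE

lemma memIE_of_eventually {E : Set ℝ} {a b : ℕ → ℝ}
    (hgap : ∀ᶠ n in atTop, IsGapComponent E (a n) (b n)) (had : AlmostDecreasing a)
    (ha : Tendsto a atTop (𝓝 0)) (hab : Tendsto (fun n => a n / b n) atTop (𝓝 0)) :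
    ∃ a' b', MemIE E a' b' ∧ a' =ᶠ[atTop] a ∧ b' =ᶠ[atTop] b := by
  obtain ⟨N, hN⟩ := eventually_atTop.1 hgap
  have htail {c : ℕ → ℝ} : (fun n => c (max n N)) =ᶠ[atTop] c := by
    filter_upwards [eventually_ge_atTop N] with n hn
    rw [max_eq_left hn]
  have hgap' (n : ℕ) : IsGapComponent E (a (max n N)) (b (max n N)) := hN _ (le_max_right n N)
  refine ⟨_, _, ⟨hgap', had.congr htail.symm, ha.congr' htail.symm, ?_⟩, htail, htail⟩
  have h1 := tendsto_const_nhds (x := (1 : ℝ)).sub hab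
  rw [sub_zero] at h1
  refine h1.congr' ?_
  filter_upwards [htail (c := a), htail (c := b)] with n hna hnb
  have hb := (hgap' n).1.trans_lt (hgap' n).2.1
  rw [sub_div, div_self hb.ne', hna, hnb]

lemma exists_pos_forall_lt (f : ℕ → ℝ) (N : ℕ) : ∃ C > 0, ∀ n < N, f n < C := by
  obtain ⟨C, hC⟩ := ((finite_Iio N).image f).bddAbove
  exact ⟨max C 0 + 1, by positivity,
    fun n hn => (hC (mem_image_of_mem f hn)).trans_lt (by linarith [le_max_left C 0])⟩

lemma asymp_of_eventually {x y : ℕ → ℝ} (hx : ∀ n, 0 < x n) (hy : ∀ n, 0 < y n)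
    {c₁ c₂ : ℝ} (hc₁ : 0 < c₁) (h : ∀ᶠ n in atTop, c₁ * x n < y n ∧ y n < c₂ * x n) :
    Asymp x y := by
  obtain ⟨N, hN⟩ := eventually_atTop.1 h
  obtain ⟨C, hC, hyx⟩ := exists_pos_forall_lt (fun n => y n / x n) N
  obtain ⟨D, hD, hxy⟩ := exists_pos_forall_lt (fun n => x n / y n) N
  refine ⟨min c₁ D⁻¹, max c₂ C, by positivity, hC.trans_le (le_max_right _ _), fun n => ?_⟩
  rcases lt_or_ge n N with hn | hn
  · have h₁ : x n < D * y n := (div_lt_iff₀ (hy n)).1 (hxy n hn)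
    have h₂ : y n < C * x n := (div_lt_iff₀ (hx n)).1 (hyx n hn)
    constructor
    · calc min c₁ D⁻¹ * x n ≤ D⁻¹ * x n := by gcongr; exacts [(hx n).le, min_le_right _ _]
        _ < y n := by rwa [inv_mul_lt_iff₀ hD]
    · calc y n < C * x n := h₂
        _ ≤ max c₂ C * x n := by gcongr; exacts [(hx n).le, le_max_right _ _]
  · obtain ⟨h₁, h₂⟩ := hN n hn
    constructor
    · calc min c₁ D⁻¹ * x n ≤ c₁ * x n := by gcongr; exacts [(hx n).le, min_le_left _ _]
        _ < y n := h₁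
    · calc y n < c₂ * x n := h₂
        _ ≤ max c₂ C * x n := by gcongr; exacts [(hx n).le, le_max_left _ _]

section Approximation

variable {E : Set ℝ} {a b : ℕ → ℝ}

lemma tendsto_one_add_one_div_nat :
    Tendsto (fun j : ℕ => 1 + 1 / ((j : ℝ) + 1)) atTop (𝓝 1) := by
  simpa using tendsto_one_div_add_atTop_nhds_zero_nat.const_add (1 : ℝ)

lemma exists_seq_mem_right_approx (hgap : ∀ j, IsGapComponent E (a j) (b j)) :
    ∃ T : ℕ → ℝ, (∀ j, T j ∈ E) ∧ (∀ j, b j ≤ T j) ∧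
      Tendsto (fun j => T j / b j) atTop (𝓝 1) := by
  have hb (j : ℕ) : 0 < b j := (hgap j).1.trans_lt (hgap j).2.1
  have hb' (j : ℕ) : b j < (1 + 1 / ((j : ℝ) + 1)) * b j := by
    have : (0 : ℝ) < 1 / ((j : ℝ) + 1) := by positivity
    nlinarith [hb j]
  choose T hTE hbT hTb using fun j => (hgap j).exists_mem_Ico (hb' j)
  refine ⟨T, hTE, hbT, tendsto_of_tendsto_of_tendsto_of_le_of_le tendsto_const_nhds
    tendsto_one_add_one_div_nat (fun j => ?_) (fun j => ?_)⟩
  · exact (one_le_div (hb j)).2 (hbT j)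
  · exact (div_le_iff₀ (hb j)).2 (hTb j).le

lemma exists_seq_mem_left_approx (hgap : ∀ j, IsGapComponent E (a j) (b j))
    (ha : ∀ j, 0 < a j) :
    ∃ S : ℕ → ℝ, (∀ j, S j ∈ E) ∧ Tendsto (fun j => S j / a j) atTop (𝓝 1) := by
  have ha' (j : ℕ) : a j / (1 + 1 / ((j : ℝ) + 1)) < a j :=
    div_lt_self (ha j) (lt_add_of_pos_right 1 (by positivity))
  choose S hSE haS hSa using fun j => (hgap j).exists_mem_Ioc (ha j) (ha' j)
  have hlow : Tendsto (fun j : ℕ => (1 + 1 / ((j : ℝ) + 1))⁻¹) atTop (𝓝 1) := by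
    simpa using tendsto_one_add_one_div_nat.inv₀ one_ne_zero
  refine ⟨S, hSE, tendsto_of_tendsto_of_tendsto_of_le_of_le hlow tendsto_const_nhds
    (fun j => ?_) (fun j => (div_le_one (ha j)).2 (hSa j))⟩
  rw [le_div_iff₀ (ha j), ← div_eq_inv_mul]
  exact (haS j).le

end Approximation

/-- The limits defining `R*`, normalised: a normal scaling sequence may be replaced by the
distances witnessing its normality (`RstarX_eq_sSup`). -/
def IsRatioLimit (E : Set ℝ) (L : ℝ) : Prop :=
  ∃ τ s : ℕ → ℝ, MemE0d E τ ∧ (∀ n, s n ∈ E) ∧ Tendsto (fun n => s n / τ n) atTop (𝓝 L)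

namespace IsRatioLimit

variable {E : Set ℝ}

lemma one {τ : ℕ → ℝ} (hτ : MemE0d E τ) : IsRatioLimit E 1 :=
  ⟨τ, τ, hτ, fun n => (hτ.2.1 n).1,
    tendsto_const_nhds.congr fun n => (div_self (hτ.2.1 n).2).symm⟩

lemma exists_mem_Icc (hE : E ⊆ Ici 0) {τ : ℕ → ℝ} (hτ : MemE0d E τ) {K C : ℝ}
    (h : ∃ᶠ n in atTop, ∃ x ∈ E, K * τ n ≤ x ∧ x ≤ C * τ n) :
    ∃ L ∈ Icc K C, IsRatioLimit E L := by
  obtain ⟨φ, hφ, hx⟩ := extraction_of_frequently_atTop h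
  choose x hxE hKx hxC using hx
  have hpos (k : ℕ) : 0 < τ (φ k) := hτ.pos hE _
  have hmem (k : ℕ) : x k / τ (φ k) ∈ Icc K C :=
    ⟨(le_div_iff₀ (hpos k)).2 (hKx k), (div_le_iff₀ (hpos k)).2 (hxC k)⟩
  obtain ⟨L, hL, ψ, hψ, hlim⟩ := tendsto_subseq_of_bounded (Metric.isBounded_Icc K C) hmem
  rw [isClosed_Icc.closure_eq] at hL
  exact ⟨L, hL, τ ∘ φ ∘ ψ, x ∘ ψ, hτ.comp_strictMono (hφ.comp hψ), fun n => hxE _, hlim⟩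

lemma exists_pos_lt (hE : E ⊆ Ici 0) {L k C : ℝ} (hL : IsRatioLimit E L) (hkL : k < L)
    (hLC : L < C) {ε : ℝ} (hε : 0 < ε) :
    ∃ t, 0 < t ∧ t < ε ∧ t ∈ E ∧ ∃ u ∈ E, k * t < u ∧ u < C * t := by
  obtain ⟨τ, s, hτ, hs, hlim⟩ := hL
  obtain ⟨n, hτε, hsτ⟩ := ((hτ.2.2.eventually (gt_mem_nhds hε)).and
    (hlim.eventually (Ioo_mem_nhds hkL hLC))).exists
  have hpos := hτ.pos hE n
  exact ⟨τ n, hpos, hτε, (hτ.2.1 n).1, s n, hs n, (lt_div_iff₀ hpos).1 hsτ.1,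
    (div_lt_iff₀ hpos).1 hsτ.2⟩

end IsRatioLimit

lemma sSup_ofReal_image_lt_top_iff {S : Set ℝ} :
    sSup (ENNReal.ofReal '' S) < ⊤ ↔ BddAbove S := by
  refine ⟨fun h => ⟨(sSup (ENNReal.ofReal '' S)).toReal, fun L hL => ?_⟩, fun ⟨K, hK⟩ => ?_⟩
  · calc L ≤ (ENNReal.ofReal L).toReal := by rw [ENNReal.toReal_ofReal']; exact le_max_left _ _
      _ ≤ _ := ENNReal.toReal_mono h.ne (le_sSup (mem_image_of_mem _ hL))
  · exact (sSup_le (forall_mem_image.2 fun L hL => ENNReal.ofReal_le_ofReal (hK hL))).trans_lt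
      ENNReal.ofReal_lt_top

section DistanceSet

variable {X : Type*} [MetricSpace X] (p : X)

lemma distSet_subset_Ici : {t : ℝ | ∃ x : X, dist x p = t} ⊆ Ici 0 := by
  rintro _ ⟨x, rfl⟩
  exact dist_nonneg

lemma RstarX_eq_sSup :
    RstarX p = sSup (ENNReal.ofReal '' {L | IsRatioLimit {t : ℝ | ∃ x : X, dist x p = t} L}) := by
  refine le_antisymm (sSup_le ?_) (sSup_le ?_)
  · rintro _ ⟨r, x, L, ⟨⟨hr, hr0⟩, y, hyad, hy⟩, hxL, rfl⟩
    refine le_sSup (mem_image_of_mem _ ?_)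
    obtain ⟨N, hN⟩ := eventually_atTop.1 <| (hy.eventually (lt_mem_nhds one_pos)).mono
      fun n hn => (div_pos_iff_of_pos_right (hr n)).1 hn
    have hy0 : Tendsto (fun n => dist (y n) p) atTop (𝓝 0) := by
      simpa using (hy.mul hr0).congr fun n => div_mul_cancel₀ _ (hr n).ne'
    have hxy : Tendsto (fun n => dist (x n) p / dist (y n) p) atTop (𝓝 L) := by
      simpa using (hxL.div hy one_ne_zero).congr fun n => div_div_div_cancel_right₀ (hr n).ne' _ _
    have hshift := tendsto_add_atTop_nat N
    exact ⟨fun n => dist (y (n + N)) p, fun n => dist (x (n + N)) p,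
      ⟨hyad.comp_add N, fun n => ⟨⟨_, rfl⟩, (hN _ (Nat.le_add_left N n)).ne'⟩, hy0.comp hshift⟩,
      fun n => ⟨_, rfl⟩, hxy.comp hshift⟩
  · rintro _ ⟨L, ⟨τ, s, hτ, hs, hL⟩, rfl⟩
    choose y hy using fun n => (hτ.2.1 n).1
    choose z hz using hs
    have hτpos := hτ.pos (distSet_subset_Ici p)
    refine le_sSup ⟨τ, z, L, ⟨⟨hτpos, hτ.2.2⟩, y, ?_, ?_⟩, ?_, rfl⟩
    · simpa only [hy] using hτ.1
    · simpa only [hy] using tendsto_const_nhds.congr fun n => (div_self (hτpos n).ne').symm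
    · simpa only [hz] using hL

lemma exists_mem_distSet_pos_lt (hp : p ∈ closure ({p}ᶜ : Set X)) :
    ∀ ε > 0, ∃ e ∈ {t : ℝ | ∃ x : X, dist x p = t}, 0 < e ∧ e < ε := by
  intro ε hε
  obtain ⟨q, hq, hqp⟩ := Metric.mem_closure_iff.1 hp ε hε
  exact ⟨dist q p, ⟨q, rfl⟩, dist_pos.2 hq, dist_comm p q ▸ hqp⟩

end DistanceSet

section GapConstruction

variable {E : Set ℝ}

lemma isGapComponent_sSup_sInf {c d : ℝ} (hc : 0 ≤ c) (hl : (E ∩ Icc c d).Nonempty)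
    (hr : (E ∩ Ioi d).Nonempty) (hd : d < sInf (E ∩ Ioi d)) :
    IsGapComponent E (sSup (E ∩ Icc c d)) (sInf (E ∩ Ioi d)) := by
  have hbdd : BddAbove (E ∩ Icc c d) := bddAbove_Icc.mono inter_subset_right
  have hbdd' : BddBelow (E ∩ Ioi d) := ⟨d, fun x hx => hx.2.le⟩
  have hcd : sSup (E ∩ Icc c d) ≤ d := csSup_le hl fun x hx => hx.2.2
  refine .of_approx ?_ (hcd.trans_lt hd) ?_ (fun a' ha' => ?_) (fun b' hb' => ?_)
  · obtain ⟨x, hx⟩ := hl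
    exact hc.trans (hx.2.1.trans (le_csSup hbdd hx))
  · refine eq_empty_iff_forall_notMem.2 fun x ⟨hx, hxE⟩ => ?_
    rcases le_or_gt x d with hxd | hdx
    · obtain ⟨y, hy⟩ := hl
      exact (le_csSup hbdd ⟨hxE, (hy.2.1.trans (le_csSup hbdd hy)).trans hx.1.le, hxd⟩).not_gt hx.1
    · exact (csInf_le hbdd' ⟨hxE, hdx⟩).not_gt hx.2
  · obtain ⟨x, hx, hax⟩ := exists_lt_of_lt_csSup hl ha'
    exact ⟨x, hx.1, hax, le_csSup hbdd hx⟩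
  · obtain ⟨x, hx, hxb⟩ := exists_lt_of_csInf_lt hr hb'
    exact ⟨x, hx.1, csInf_le hbdd' hx, hxb⟩

variable {K : ℝ} {τ : ℕ → ℝ}

lemma tendsto_div_of_le_mul {a b : ℕ → ℝ} (hτ : ∀ n, 0 < τ n) (ha : ∀ n, 0 ≤ a n)
    (haK : ∀ n, a n ≤ K * τ n) (hb : Tendsto (fun n => b n / τ n) atTop atTop) :
    Tendsto (fun n => a n / b n) atTop (𝓝 0) := by
  refine tendsto_of_tendsto_of_tendsto_of_le_of_le' tendsto_const_nhds
    (by simpa using hb.inv_tendsto_atTop.const_mul K) ?_ ?_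
  all_goals filter_upwards [hb.eventually (eventually_gt_atTop 0)] with n hn
  · exact div_nonneg (ha n) ((div_pos_iff_of_pos_right (hτ n)).1 hn).le
  · have hbn := (div_pos_iff_of_pos_right (hτ n)).1 hn
    rw [← mul_div_assoc]
    exact div_le_div_of_nonneg_right (haK n) hbn.le

lemma tendsto_sInf_Ioi_div_atTop (hE : E ⊆ Ici 0) (hK : ∀ L, IsRatioLimit E L → L < K)
    (hτ : MemE0d E τ) : Tendsto (fun n => sInf (E ∩ Ioi (K * τ n)) / τ n) atTop atTop := by
  refine tendsto_atTop.2 fun C => ?_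
  by_contra h
  have hne : ∀ᶠ n in atTop, (E ∩ Ioi (K * τ n)).Nonempty := by
    have hKτ : Tendsto (fun n => K * τ n) atTop (𝓝 0) := by simpa using hτ.2.2.const_mul K
    filter_upwards [hKτ.eventually (gt_mem_nhds (hτ.pos hE 0))] with n hn
    exact ⟨τ 0, (hτ.2.1 0).1, hn⟩
  have hfreq : ∃ᶠ n in atTop, ∃ x ∈ E, K * τ n ≤ x ∧ x ≤ C * τ n := by
    refine ((not_eventually.1 h).and_eventually hne).mono fun n ⟨hn, hne⟩ => ?_
    obtain ⟨x, hx, hxC⟩ :=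
      exists_lt_of_csInf_lt hne ((div_lt_iff₀ (hτ.pos hE n)).1 (not_le.1 hn))
    exact ⟨x, hx.1, hx.2.le, hxC.le⟩
  obtain ⟨L, hL, hLE⟩ := IsRatioLimit.exists_mem_Icc hE hτ hfreq
  exact (hK L hLE).not_ge hL.1

lemma exists_memIE_of_forall_lt (hE : E ⊆ Ici 0) (hK : ∀ L, IsRatioLimit E L → L < K)
    (hτ : MemE0d E τ) :
    ∃ a b, MemIE E a b ∧ (∀ᶠ n in atTop, τ n ≤ a n ∧ a n ≤ K * τ n) ∧
      Tendsto (fun n => b n / τ n) atTop atTop := by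
  have hK1 : 1 < K := hK 1 (IsRatioLimit.one hτ)
  have hτpos := hτ.pos hE
  set a := fun n => sSup (E ∩ Icc (τ n) (K * τ n))
  set b := fun n => sInf (E ∩ Ioi (K * τ n))
  have hb : Tendsto (fun n => b n / τ n) atTop atTop := tendsto_sInf_Ioi_div_atTop hE hK hτ
  have hmem (n : ℕ) : τ n ∈ E ∩ Icc (τ n) (K * τ n) :=
    ⟨(hτ.2.1 n).1, le_rfl, le_mul_of_one_le_left (hτpos n).le hK1.le⟩
  have hne (n : ℕ) : (E ∩ Icc (τ n) (K * τ n)).Nonempty := ⟨τ n, hmem n⟩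
  have hbdd (n : ℕ) : BddAbove (E ∩ Icc (τ n) (K * τ n)) := bddAbove_Icc.mono inter_subset_right
  have hτa (n : ℕ) : τ n ≤ a n := le_csSup (hbdd n) (hmem n)
  have haK (n : ℕ) : a n ≤ K * τ n := csSup_le (hne n) fun x hx => hx.2.2
  have hKb : ∀ᶠ n in atTop, K * τ n < b n := by
    filter_upwards [hb.eventually (eventually_gt_atTop K)] with n hn
    exact (lt_div_iff₀ (hτpos n)).1 hn
  have hgap : ∀ᶠ n in atTop, IsGapComponent E (a n) (b n) := by
    filter_upwards [hKb] with n hn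
    refine isGapComponent_sSup_sInf (hτpos n).le (hne n) ?_ hn
    by_contra hempty
    rw [not_nonempty_iff_eq_empty] at hempty
    simp only [b, hempty, Real.sInf_empty] at hn
    exact hn.not_gt (mul_pos (one_pos.trans hK1) (hτpos n))
  have had : AlmostDecreasing a := by
    obtain ⟨N, hN⟩ := hτ.1.exists_antitone_tail
    filter_upwards [hgap, hKb, eventually_ge_atTop N] with n hgn hKn hn
    refine csSup_le (hne (n + 1)) fun x hx => ((hgn.le_or_le hx.1).resolve_right ?_)
    have : K * τ (n + 1) ≤ K * τ n := by gcongr; exact hN hn n.le_succ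
    exact (hx.2.2.trans this |>.trans_lt hKn).not_ge
  have ha0 : Tendsto a atTop (𝓝 0) :=
    tendsto_of_tendsto_of_tendsto_of_le_of_le hτ.2.2 (by simpa using hτ.2.2.const_mul K) hτa haK
  obtain ⟨a', b', hab', ha', hb'⟩ := memIE_of_eventually hgap had ha0
    (tendsto_div_of_le_mul hτpos (fun n => (hτpos n).le.trans (hτa n)) haK hb)
  refine ⟨a', b', hab', ?_, hb.congr' ?_⟩
  · filter_upwards [ha'] with n hn
    exact hn ▸ ⟨hτa n, haK n⟩
  · filter_upwards [hb'] with n hn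
    rw [hn]

end GapConstruction

theorem csp_of_bddAbove {E : Set ℝ} (hE : E ⊆ Ici 0) (hbdd : BddAbove {L | IsRatioLimit E L}) :
    CSP E := by
  obtain ⟨K, hK⟩ := hbdd
  intro τ hτ
  obtain ⟨a, b, hab, hbounds, -⟩ :=
    exists_memIE_of_forall_lt hE (fun L hL => (hK hL).trans_lt (lt_add_one K)) hτ
  have hτpos := hτ.pos hE
  have ha (n : ℕ) : 0 < a n := (hab.1 n).pos fun _ => hτ.exists_mem_pos_lt hE
  refine ⟨a, b, hab, asymp_of_eventually hτpos ha (c₂ := K + 2) one_half_pos ?_⟩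
  filter_upwards [hbounds] with n ⟨hτa, haK⟩
  constructor <;> nlinarith [hτpos n]

/-- Every `k` recurs infinitely often as `(Nat.unpair j).1`, and `τ j` is picked below
`min (τ (j-1)) (1/(j+1))`. -/
lemma exists_strictAnti_frequently {P : ℕ → ℝ → Prop}
    (h : ∀ k, ∀ ε > 0, ∃ t, 0 < t ∧ t < ε ∧ P k t) :
    ∃ τ : ℕ → ℝ, StrictAnti τ ∧ (∀ j, 0 < τ j) ∧ Tendsto τ atTop (𝓝 0) ∧
      (∀ j, ∃ k, P k (τ j)) ∧ ∀ k, ∃ᶠ j in atTop, P k (τ j) := by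
  choose T hTpos hTlt hP using fun k (ε : {ε : ℝ // 0 < ε}) => h k ε ε.2
  let g (j : ℕ) : ℕ := (Nat.unpair j).1
  let bound (j : ℕ) (ε : {ε : ℝ // 0 < ε}) : {ε : ℝ // 0 < ε} :=
    ⟨min ε (1 / ((j : ℝ) + 1)), lt_min ε.2 (by positivity)⟩
  let σ : ℕ → {ε : ℝ // 0 < ε} :=
    fun j => Nat.rec ⟨1, one_pos⟩ (fun j ε => ⟨T (g j) (bound j ε), hTpos _ _⟩) j
  let τ (j : ℕ) : ℝ := σ (j + 1)
  have hτ (j : ℕ) : τ j = T (g j) (bound j (σ j)) := rfl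
  have hPτ (j : ℕ) : P (g j) (τ j) := by rw [hτ]; exact hP _ _
  refine ⟨τ, strictAnti_nat_of_succ_lt fun j => ?_, fun j => (σ (j + 1)).2, ?_,
    fun j => ⟨g j, hPτ j⟩, fun k => frequently_atTop.2 fun N => ?_⟩
  · rw [hτ (j + 1)]
    exact (hTlt _ _).trans_le (min_le_left _ _)
  · refine squeeze_zero (fun j => (σ (j + 1)).2.le) (fun j => ?_)
      tendsto_one_div_add_atTop_nhds_zero_nat
    rw [hτ j]
    exact ((hTlt _ _).trans_le (min_le_right _ _)).le
  · have hg : g (Nat.pair k N) = k := by simp [g]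
    refine ⟨Nat.pair k N, Nat.right_le_pair k N, ?_⟩
    have := hPτ (Nat.pair k N)
    rwa [hg] at this

theorem bddAbove_of_csp {E : Set ℝ} (hE : E ⊆ Ici 0) (hcsp : CSP E) :
    BddAbove {L | IsRatioLimit E L} := by
  by_contra hunb
  choose L hL hkL using fun k : ℕ => not_bddAbove_iff.1 hunb k
  obtain ⟨τ, hanti, hτpos, hτ0, hτE, hfreq⟩ := exists_strictAnti_frequently
    (P := fun k t => t ∈ E ∧ ∃ u ∈ E, k * t < u ∧ u < (L k + 1) * t)
    fun k ε hε => (hL k).exists_pos_lt hE (hkL k) (lt_add_one (L k)) hε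
  have hτ : MemE0d E τ := ⟨hanti.almostDecreasing, fun j => by
    obtain ⟨_, hj, -⟩ := hτE j
    exact ⟨hj, (hτpos j).ne'⟩, hτ0⟩
  obtain ⟨a, b, hab, c₁, c₂, hc₁, -, hc⟩ := hcsp τ hτ
  have ha (j : ℕ) : 0 < a j := (mul_pos hc₁ (hτpos j)).trans (hc j).1
  have hb : Tendsto (fun j => b j / τ j) atTop atTop := by
    have hba : Tendsto (fun j => b j / a j) atTop atTop := by
      refine (tendsto_nhdsWithin_iff.2 ⟨hab.tendsto_div, Eventually.of_forall
        fun j => div_pos (ha j) (hab.right_pos j)⟩).inv_tendsto_nhdsGT_zero.congr fun j => ?_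
      exact inv_div (a j) (b j)
    refine tendsto_atTop_mono (fun j => ?_) (hba.atTop_mul_const hc₁)
    calc b j / a j * c₁ ≤ b j / a j * (a j / τ j) :=
          mul_le_mul_of_nonneg_left ((lt_div_iff₀ (hτpos j)).2 (hc j).1).le
            (div_pos (hab.right_pos j) (ha j)).le
      _ = b j / τ j := div_mul_div_cancel₀ (ha j).ne'
  set k := ⌈c₂⌉₊
  obtain ⟨j, ⟨-, u, huE, hku, huL⟩, hbj⟩ :=
    ((hfreq k).and_eventually (hb.eventually (eventually_gt_atTop (L k + 1)))).exists
  have hau : a j < u := calc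
    a j < c₂ * τ j := (hc j).2
    _ ≤ k * τ j := by gcongr; exacts [(hτpos j).le, Nat.le_ceil c₂]
    _ < u := hku
  have hub : u < b j := huL.trans ((lt_div_iff₀ (hτpos j)).1 hbj)
  exact (hab.1 j).notMem ⟨hau, hub⟩ huE

lemma tendsto_atTop_of_tendsto_comp_zero {l : ℕ → ℝ} (hl : ∀ w, 0 < l w) {f : ℕ → ℕ}
    (hf : Tendsto (l ∘ f) atTop (𝓝 0)) : Tendsto f atTop atTop := by
  refine tendsto_atTop.2 fun W => ?_
  filter_upwards [(finite_Iio W).eventually_all.2 fun w _ => hf.eventually (gt_mem_nhds (hl w))]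
    with n hn
  by_contra! h
  exact (hn (f n) h).false

lemma exists_le_lt_of_tendsto_zero {l : ℕ → ℝ} (hl : Tendsto l atTop (𝓝 0)) {w : ℕ}
    (hw : 0 < l w) : ∃ v, w ≤ v ∧ l w ≤ l v ∧ l (v + 1) < l w := by
  classical
  have hex : ∃ k, l (w + k + 1) < l w := by
    obtain ⟨N, hN⟩ := eventually_atTop.1 (hl.eventually (gt_mem_nhds hw))
    exact ⟨N, hN _ (by omega)⟩
  refine ⟨w + Nat.find hex, Nat.le_add_right w _, ?_, Nat.find_spec hex⟩
  cases h : Nat.find hex with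
  | zero => rfl
  | succ k => exact not_lt.1 (Nat.find_min hex (h ▸ k.lt_succ_self))

section Universal

variable {E : Set ℝ} {l m : ℕ → ℝ}

lemma IsUniversal.exists_index (hU : IsUniversal E l m) (h0 : ∀ ε > 0, ∃ e ∈ E, 0 < e ∧ e < ε)
    {a b : ℕ → ℝ} (hab : MemIE E a b) :
    ∃ f : ℕ → ℕ, Tendsto f atTop atTop ∧ ∀ᶠ n in atTop, a n = l (f n) ∧ b n = m (f n) := by
  obtain ⟨N, f, hf⟩ := hU.2 a b hab
  have hfab : ∀ᶠ n in atTop, a n = l (f n) ∧ b n = m (f n) := by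
    filter_upwards [eventually_ge_atTop N] with n hn
    have hgap := hU.1.1 (f n)
    rw [← hf n hn] at hgap
    exact ⟨hf n hn, (hab.1 n).right_unique hgap⟩
  refine ⟨f, tendsto_atTop_of_tendsto_comp_zero (fun w => (hU.1.1 w).pos h0)
    (hab.2.2.1.congr' (hfab.mono fun n hn => hn.1)), hfab⟩

theorem ofReal_le_Mlim (hE : E ⊆ Ici 0) (h0 : ∀ ε > 0, ∃ e ∈ E, 0 < e ∧ e < ε) {K : ℝ}
    (hK : ∀ L, IsRatioLimit E L → L < K) (hU : IsUniversal E l m) {L : ℝ}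
    (hL : IsRatioLimit E L) : ENNReal.ofReal L ≤ Mlim l m := by
  obtain ⟨τ, s, hτ, hs, hsτ⟩ := hL
  have hτpos := hτ.pos hE
  obtain ⟨a, b, hab, hbounds, hbτ⟩ := exists_memIE_of_forall_lt hE hK hτ
  obtain ⟨f, hf, hfab⟩ := hU.exists_index h0 hab
  have hlpos (w : ℕ) : 0 < l w := (hU.1.1 w).pos h0
  have hmpos (w : ℕ) : 0 < m w := hU.1.right_pos w
  choose v hfv hlv hlv1 using fun n => exists_le_lt_of_tendsto_zero hU.1.2.2.1 (hlpos (f n))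
  have hv : Tendsto v atTop atTop := tendsto_atTop_mono hfv hf
  have hsa : ∀ᶠ n in atTop, s n ≤ a n := by
    filter_upwards [hsτ.eventually (gt_mem_nhds (lt_add_one L)),
      hbτ.eventually (eventually_gt_atTop (L + 1))] with n hsn hbn
    refine ((hab.1 n).le_or_le (hs n)).resolve_right fun hbs => ?_
    have := div_le_div_of_nonneg_right hbs (hτpos n).le
    linarith
  have hmτ : ∀ᶠ n in atTop, m (v n + 1) ≤ τ n := by
    have hK0 : 0 < K := one_pos.trans (hK 1 (IsRatioLimit.one hτ))
    filter_upwards [hfab, hbounds, ((tendsto_add_atTop_nat 1).comp hv).eventually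
      (hU.1.tendsto_div.eventually (gt_mem_nhds (inv_pos.2 hK0)))] with n hn hbn hsmall
    refine ((hU.1.1 _).le_or_le (hτ.2.1 n).1).resolve_left fun hτl => ?_
    have hma : m (v n + 1) ≤ a n := (hab.1 n).right_le_of_lt (hU.1.1 _) (hn.1 ▸ hlv1 n)
    have hKτ : K * τ n ≤ K * l (v n + 1) := by gcongr
    rw [Function.comp_apply, div_lt_iff₀ (hmpos _), inv_mul_eq_div, lt_div_iff₀ hK0] at hsmall
    linarith [hbn.2, mul_comm K (l (v n + 1))]
  calc ENNReal.ofReal L = limsup (fun n => ENNReal.ofReal (s n / τ n)) atTop :=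
        (ENNReal.tendsto_ofReal hsτ).limsup_eq.symm
    _ ≤ limsup ((fun w => ENNReal.ofReal (l w / m (w + 1))) ∘ v) atTop := by
        refine limsup_le_limsup ?_
        filter_upwards [hfab, hsa, hmτ] with n hn hsan hmτn
        refine ENNReal.ofReal_le_ofReal ?_
        calc s n / τ n ≤ a n / τ n := div_le_div_of_nonneg_right hsan (hτpos n).le
          _ ≤ l (v n) / m (v n + 1) := div_le_div₀ (hlpos _).le (hn.1 ▸ hlv n) (hmpos _) hmτn
    _ ≤ Mlim l m := by
        rw [limsup_comp]
        exact limsup_le_limsup_of_le hv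

lemma exists_memE0d_subseq (hgap : ∀ j, IsGapComponent E (l j) (m j))
    (hm0 : Tendsto m atTop (𝓝 0)) :
    ∃ ψ : ℕ → ℕ, ∃ τ : ℕ → ℝ, StrictMono ψ ∧ MemE0d E τ ∧ (∀ i, m (ψ i) ≤ τ i) ∧
      Tendsto (fun i => τ i / m (ψ i)) atTop (𝓝 1) := by
  obtain ⟨T, hTE, hmT, hTm⟩ := exists_seq_mem_right_approx hgap
  have hmpos (j : ℕ) : 0 < m j := (hgap j).1.trans_lt (hgap j).2.1
  have hTpos (j : ℕ) : 0 < T j := (hmpos j).trans_le (hmT j)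
  have hT0 : Tendsto T atTop (𝓝 0) := by
    simpa using (hTm.mul hm0).congr fun j => div_mul_cancel₀ _ (hmpos j).ne'
  obtain ⟨ψ, hψ, hanti⟩ := exists_strictAnti_subseq hTpos hT0
  exact ⟨ψ, T ∘ ψ, hψ, ⟨hanti.almostDecreasing, fun i => ⟨hTE _, (hTpos _).ne'⟩,
    hT0.comp hψ.tendsto_atTop⟩, fun i => hmT _, hTm.comp hψ.tendsto_atTop⟩

lemma exists_strictMono_lt_of_Mlim_eq_top (htop : Mlim l m = ⊤) :
    ∃ φ : ℕ → ℕ, StrictMono φ ∧ ∀ j : ℕ, (j : ℝ) + 1 < l (φ j) / m (φ j + 1) := by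
  refine extraction_forall_of_frequently (P := fun j w => (j : ℝ) + 1 < l w / m (w + 1))
    fun j => ?_
  refine (frequently_lt_of_lt_limsup (b := ENNReal.ofReal ((j : ℝ) + 1)) (by isBoundedDefault)
    (htop ▸ ENNReal.ofReal_lt_top)).mono fun w hw => ?_
  exact (ENNReal.ofReal_lt_ofReal_iff'.1 hw).1

theorem Mlim_ne_top (hE : E ⊆ Ici 0) (h0 : ∀ ε > 0, ∃ e ∈ E, 0 < e ∧ e < ε) {K : ℝ}
    (hK : ∀ L, IsRatioLimit E L → L < K) (hU : IsUniversal E l m) : Mlim l m ≠ ⊤ := by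
  intro htop
  have hmpos (w : ℕ) : 0 < m w := hU.1.right_pos w
  obtain ⟨φ, hφ, hρ⟩ := exists_strictMono_lt_of_Mlim_eq_top htop
  have hmφ (j : ℕ) : m (φ j + 1) < l (φ j) := by
    have h := (lt_div_iff₀ (hmpos _)).1 (hρ j)
    nlinarith [hmpos (φ j + 1), (j.cast_nonneg : (0 : ℝ) ≤ j)]
  obtain ⟨ψ, τ, hψ, hτ, hmτ, hτm⟩ := exists_memE0d_subseq (fun j => hU.1.1 (φ j + 1))
    (squeeze_zero (fun j => (hmpos _).le) (fun j => (hmφ j).le)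
      (hU.1.2.2.1.comp hφ.tendsto_atTop))
  obtain ⟨a, b, hab, hbounds, -⟩ := exists_memIE_of_forall_lt hE hK hτ
  obtain ⟨f, hf, hfab⟩ := hU.exists_index h0 hab
  obtain ⟨N, hN⟩ := hU.1.2.1.exists_forall_notMem_Ioo
  set W := fun i => φ (ψ i)
  have hW : Tendsto W atTop atTop := (hφ.comp hψ).tendsto_atTop
  have hρW : Tendsto (fun i => l (W i) / m (W i + 1)) atTop atTop :=
    tendsto_atTop_mono (fun i => (hρ (ψ i)).le)
      ((tendsto_natCast_atTop_atTop.comp hψ.tendsto_atTop).atTop_add tendsto_const_nhds)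
  have hK0 : 0 < K := one_pos.trans (hK 1 (IsRatioLimit.one hτ))
  obtain ⟨i, hai, hbi, hτi, hρi, hfi, hWi⟩ := (hfab.and <| hbounds.and <|
    (hτm.eventually (gt_mem_nhds one_lt_two)).and <|
    (hρW.eventually (eventually_gt_atTop (2 * K))).and <|
    (hf.eventually (eventually_ge_atTop N)).and (hW.eventually (eventually_ge_atTop N))).exists
  -- the gap of `τ i` would start strictly between the consecutive values `l (W i + 1)`, `l (W i)`
  refine hN hfi hWi ⟨?_, ?_⟩
  · calc
      l (W i + 1) < m (W i + 1) := (hU.1.1 _).2.1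
      _ ≤ τ i := hmτ i
      _ ≤ l (f i) := hai.1 ▸ hbi.1
  · rw [div_lt_iff₀ (hmpos _)] at hτi
    rw [lt_div_iff₀ (hmpos _)] at hρi
    calc l (f i) ≤ K * τ i := hai.1 ▸ hbi.2
      _ ≤ K * (2 * m (W i + 1)) := by gcongr
      _ < l (W i) := by linarith

theorem isRatioLimit_Mlim (h0 : ∀ ε > 0, ∃ e ∈ E, 0 < e ∧ e < ε) (hlm : MemIE E l m)
    (htop : Mlim l m ≠ ⊤) (hzero : Mlim l m ≠ 0) : IsRatioLimit E (Mlim l m).toReal := by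
  have hlpos (w : ℕ) : 0 < l w := (hlm.1 w).pos h0
  have hmpos (w : ℕ) : 0 < m w := hlm.right_pos w
  have hMpos : 0 < (Mlim l m).toReal := ENNReal.toReal_pos hzero htop
  obtain ⟨x, hxM, hx⟩ := exists_seq_tendsto_limsup
    (u := fun w => ENNReal.ofReal (l w / m (w + 1))) (f := atTop)
  have hρ : Tendsto (fun j => l (x j) / m (x j + 1)) atTop (𝓝 (Mlim l m).toReal) := by
    refine ((ENNReal.tendsto_toReal htop).comp hxM).congr fun j => ?_
    exact ENNReal.toReal_ofReal (div_pos (hlpos _) (hmpos _)).le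
  have hm0 : Tendsto (fun j => m (x j + 1)) atTop (𝓝 0) := by
    have := (hlm.2.2.1.comp hx).div hρ hMpos.ne'
    rw [zero_div] at this
    exact this.congr fun j => div_div_cancel₀ (hlpos _).ne'
  obtain ⟨ψ, τ, hψ, hτ, -, hτm⟩ := exists_memE0d_subseq (fun j => hlm.1 (x j + 1)) hm0
  obtain ⟨S, hSE, hSl⟩ := exists_seq_mem_left_approx (fun j => hlm.1 (x (ψ j))) fun j => hlpos _
  refine ⟨τ, S, hτ, hSE, ?_⟩
  have := (hSl.mul (hρ.comp hψ.tendsto_atTop)).div hτm one_ne_zero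
  rw [one_mul, div_one] at this
  refine this.congr fun j => ?_
  have := (hlpos (x (ψ j))).ne'
  have := (hmpos (x (ψ j) + 1)).ne'
  have : τ j ≠ 0 := (hτ.2.1 j).2
  simp only [Pi.div_apply, Function.comp_apply]
  field_simp

end Universal

/-- Theorem 3.10. -/
theorem stmt10 {X : Type*} [MetricSpace X] (p : X) :
    (RstarX p < ⊤ ↔ CSP {t : ℝ | ∃ x : X, dist x p = t}) ∧
      (RstarX p < ⊤ → p ∈ closure ({p}ᶜ : Set X) →
        ∀ l m : ℕ → ℝ, IsUniversal {t : ℝ | ∃ x : X, dist x p = t} l m →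
          RstarX p = Mlim l m) := by
  have hE := distSet_subset_Ici p
  rw [RstarX_eq_sSup, sSup_ofReal_image_lt_top_iff]
  refine ⟨⟨csp_of_bddAbove hE, bddAbove_of_csp hE⟩, fun ⟨K, hK⟩ hp l m hU => ?_⟩
  have h0 := exists_mem_distSet_pos_lt p hp
  have hK' : ∀ L, IsRatioLimit _ L → L < K + 1 := fun L hL => (hK hL).trans_lt (lt_add_one K)
  have htop := Mlim_ne_top hE h0 hK' hU
  refine le_antisymm (sSup_le (forall_mem_image.2 fun L hL => ofReal_le_Mlim hE h0 hK' hU hL)) ?_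
  rcases eq_or_ne (Mlim l m) 0 with hzero | hzero
  · exact hzero ▸ zero_le
  · rw [← ENNReal.ofReal_toReal htop]
    exact le_sSup (mem_image_of_mem _ (isRatioLimit_Mlim h0 hU.1 htop hzero))
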